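/- Let V be a lextensive category with set-indexed copowers of 1. Then the terminal object 1 of V is connected (i.e., the functor V(1,−) : V → Set preserves set-indexed coproducts) if and only if the copower functor Set → V, X ↦ X · 1, is fully faithful. -/

import Mathlib

open CategoryTheory CategoryTheory.Limits Opposite

universe v u

variable (V : Type u) [Category.{v} V]

/-- The copower functor `Set → V`, `X ↦ X · 1`. -/
noncomputable def copowerFunctor [HasTerminal V] [HasCoproducts.{v} V] : Type v ⥤ V where
  obj X := ∐ fun (_ : X) => (⊤_ V)
  map {X Y} f := Sigma.desc fun x => Sigma.ι (fun (_ : Y) => (⊤_ V)) (f x)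
  map_id X := by ext x; simp
  map_comp {X Y Z} f g := by ext x; simp

/-
The copower functor is left adjoint to `V(1, -)` with unit `x ↦ ι_x : 1 ⟶ X·1`, so it is fully
faithful iff all these units are bijective; and `V(1, -)` preserves a coproduct `∐ f` iff every
point `1 ⟶ ∐ f` factors uniquely through a coprojection. For the constant family `f = 1` the
second condition is the first. Conversely, project `∐ f ⟶ ι·1`: a point of `∐ f` lands on a unique
`ι_j : 1 ⟶ ι·1`, and by extensivity `f j` is the pullback of `ι_j` along this projection, so the
point factors uniquely through `f j`.
-/

variable {V}

noncomputable def copowerFunctorIsoSigmaConst [HasTerminal V] [HasCoproducts.{v} V] :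
    copowerFunctor V ≅ sigmaConst.obj (⊤_ V) :=
  NatIso.ofComponents (fun _ => Iso.refl _) fun _ =>
    Sigma.hom_ext _ _ fun _ => by simp [copowerFunctor]

lemma sigmaConst_full_and_faithful_iff [HasCoproducts.{v} V] (A : V) :
    (sigmaConst.obj A).Full ∧ (sigmaConst.obj A).Faithful ↔
      ∀ X : Type v, Function.Bijective fun x : X => Sigma.ι (fun _ : X => A) x := by
  let adj := sigmaConstAdj A
  constructor
  · rintro ⟨_, _⟩ X
    exact (isIso_iff_bijective (adj.unit.app X)).mp inferInstance
  · intro h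
    have : ∀ X, IsIso (adj.unit.app X) := fun X => (isIso_iff_bijective _).mpr (h X)
    have : IsIso adj.unit := NatIso.isIso_of_isIso_app _
    exact ⟨adj.fullyFaithfulLOfIsIsoUnit.full, adj.fullyFaithfulLOfIsIsoUnit.faithful⟩

lemma preservesColimitsOfShape_coyoneda_discrete_iff [HasCoproducts.{v} V] (A : V) (ι : Type v) :
    PreservesColimitsOfShape (Discrete ι) (coyoneda.obj (op A)) ↔
      ∀ f : ι → V, Function.Bijective fun p : Σ j, (A ⟶ f j) => p.2 ≫ Sigma.ι f p.1 := by
  constructor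
  · intro _ f
    exact (Cofan.nonempty_isColimit_iff_bijective_fromSigma _).mp
      ⟨isColimitOfHasCoproductOfPreservesColimit (coyoneda.obj (op A)) f⟩
  · intro h
    have (f : ι → V) : PreservesColimit (Discrete.functor f) (coyoneda.obj (op A)) :=
      preservesColimit_of_preserves_colimit_cocone (coproductIsCoproduct f)
        ((isColimitMapCoconeCofanMkEquiv _ _ _).symm
          ((Cofan.nonempty_isColimit_iff_bijective_fromSigma _).mpr (h f)).some)
    exact preservesColimitsOfShape_of_discrete _

lemma isPullback_sigma_ι_map_of_isVanKampen {ι : Type*} {f g : ι → V}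
    [HasCoproduct f] [HasCoproduct g] (φ : ∀ j, f j ⟶ g j)
    (hg : IsVanKampenColimit (colimit.cocone (Discrete.functor g))) (j : ι) :
    IsPullback (Sigma.ι f j) (φ j) (Limits.Sigma.map φ) (Sigma.ι g j) :=
  (hg (colimit.cocone (Discrete.functor f)) (Discrete.natTrans fun j => φ j.as)
    (Limits.Sigma.map φ) (by ext ⟨j⟩; exact (Sigma.ι_map φ j).symm) (.of_discrete _)).mp
    ⟨colimit.isColimit _⟩ ⟨j⟩

lemma bijective_sigmaι_of_bijective_copowerι [HasTerminal V] {ι : Type v} (f : ι → V)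
    [HasCoproduct f] [HasCoproduct fun _ : ι => ⊤_ V]
    (hvk : IsVanKampenColimit (colimit.cocone (Discrete.functor fun _ : ι => ⊤_ V)))
    (hι : Function.Bijective fun i : ι => Sigma.ι (fun _ : ι => ⊤_ V) i) :
    Function.Bijective fun p : Σ j, (⊤_ V ⟶ f j) => p.2 ≫ Sigma.ι f p.1 := by
  let π : ∐ f ⟶ ∐ fun _ : ι => ⊤_ V := Limits.Sigma.map fun j => terminal.from (f j)
  have hpb (j : ι) := isPullback_sigma_ι_map_of_isVanKampen (fun j => terminal.from (f j)) hvk j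
  have hπ (j : ι) (g : ⊤_ V ⟶ f j) :
      (g ≫ Sigma.ι f j) ≫ π = Sigma.ι (fun _ : ι => ⊤_ V) j := by
    rw [Category.assoc, Sigma.ι_map, ← Category.assoc, terminal.hom_ext (g ≫ _) (𝟙 _),
      Category.id_comp]
  constructor
  · rintro ⟨j, g⟩ ⟨k, g'⟩ hgg'
    obtain rfl : j = k := hι.1 <| by simpa only [hπ] using congrArg (· ≫ π) hgg'
    obtain rfl : g = g' := (hpb j).hom_ext hgg' (Subsingleton.elim _ _)
    rfl
  · intro h
    obtain ⟨i, hi⟩ := hι.2 (h ≫ π)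
    exact ⟨⟨i, (hpb i).lift h (𝟙 _) (by simpa using hi.symm)⟩, (hpb i).lift_fst _ _ _⟩

lemma copowerFunctor_full_and_faithful_iff [HasTerminal V] [HasCoproducts.{v} V] :
    (copowerFunctor V).Full ∧ (copowerFunctor V).Faithful ↔
      ∀ X : Type v, Function.Bijective fun x : X => Sigma.ι (fun _ : X => ⊤_ V) x := by
  rw [← sigmaConst_full_and_faithful_iff]
  exact ⟨fun ⟨_, _⟩ => ⟨.of_iso copowerFunctorIsoSigmaConst,
      .of_iso copowerFunctorIsoSigmaConst⟩, fun ⟨_, _⟩ => ⟨.of_iso copowerFunctorIsoSigmaConst.symm,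
      .of_iso copowerFunctorIsoSigmaConst.symm⟩⟩

variable (V)

/-- For a lextensive `V` with set-indexed copowers of the terminal object, the terminal
object `1` is connected (i.e. `V(1,−)` preserves set-indexed coproducts) if and only if the
copower functor `Set → V`, `X ↦ X·1`, is fully faithful. -/
theorem connected_iff_copowerFunctor_fullyFaithful
    [HasFiniteLimits V] [HasCoproducts.{v} V]
    (hVK : ∀ {ι : Type v} (F : Discrete ι ⥤ V) (c : Cocone F),
      IsColimit c → IsVanKampenColimit c) :
    (∀ ι : Type v, PreservesColimitsOfShape (Discrete ι) (coyoneda.obj (op (⊤_ V)))) ↔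
      ((copowerFunctor V).Full ∧ (copowerFunctor V).Faithful) := by
  simp only [preservesColimitsOfShape_coyoneda_discrete_iff, copowerFunctor_full_and_faithful_iff]
  constructor
  · intro H X
    convert (H X fun _ => ⊤_ V).comp (Equiv.sigmaUnique X fun _ => ⊤_ V ⟶ ⊤_ V).symm.bijective
    simp [Subsingleton.elim default (𝟙 (⊤_ V))]
  · intro H ι f
    exact bijective_sigmaι_of_bijective_copowerι f (hVK _ _ (colimit.isColimit _)) (H ι)
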